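/- arXiv:2501.04405 — 5 statements merged into one kernel-verified Lean document; each statement's English description precedes it below -/
import Mathlib

section
/- Let p ≥ 2 be an integer. Consider real numbers x_1, …, x_{2p−1} satisfying: x_j ≥ 0 for all 1 ≤ j ≤ 2p−1; x_{2p−1} ≤ 1; and x_{i−1} + x_i − x_{i−2} − x_{i+1} ≥ −2 for all 1 ≤ i ≤ 2p (where any variable with index outside {1,…,2p−1} denotes 0). Then x_1 ≤ 2p² − p, and this bound is attained exactly at the point x_j = (2p−j)(2p−j+1)/2 for 1 ≤ j ≤ 2p−1. -/
/-- Feasibility for the linear program of case 31 with `Γ` supported on `γ_{2p-1}`: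
variables `x 1, …, x (2p-1)` (indices outside this range denote `0`), all nonnegative,
`x (2p-1) ≤ 1`, and `x (i-1) + x i - x (i-2) - x (i+1) ≥ -2` for `1 ≤ i ≤ 2p`. -/
def Feasible0 (p : ℕ) (x : ℤ → ℝ) : Prop :=
  (∀ j : ℤ, (j < 1 ∨ 2 * (p : ℤ) - 1 < j) → x j = 0) ∧
  (∀ j : ℤ, 1 ≤ j → j ≤ 2 * (p : ℤ) - 1 → 0 ≤ x j) ∧
  x (2 * (p : ℤ) - 1) ≤ 1 ∧
  (∀ i : ℤ, 1 ≤ i → i ≤ 2 * (p : ℤ) →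
    x (i - 1) + x i - x (i - 2) - x (i + 1) ≥ -2)

/-- Lemma A: `x i - x (i+1) ≤ 2p - i`, with `i = 2p - k`. -/
lemma lemA0 (p : ℕ) (x : ℤ → ℝ) (hx : Feasible0 p x) :
    ∀ k : ℕ, (k : ℤ) ≤ 2 * (p : ℤ) - 1 →
      x (2 * (p : ℤ) - k) - x (2 * (p : ℤ) - k + 1) ≤ (k : ℝ) := by
  obtain ⟨h0, _, htop, hcon⟩ := hx
  intro k
  induction k using Nat.strong_induction_on with
  | _ k ih =>
    intro hk
    match k, ih, hk with
    | 0, _, hk =>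
      rw [h0 (2 * (p : ℤ) - ((0:ℕ):ℤ)) (by right; omega),
        h0 (2 * (p : ℤ) - ((0:ℕ):ℤ) + 1) (by right; omega)]
      norm_num
    | 1, _, hk =>
      rw [show 2 * (p : ℤ) - ((1:ℕ):ℤ) = 2 * (p : ℤ) - 1 by push_cast; ring,
        h0 (2 * (p : ℤ) - 1 + 1) (by right; omega)]
      push_cast
      linarith
    | (m + 2), ih, hk =>
      have hIH := ih m (by omega) (by omega)
      have hc := hcon (2 * (p : ℤ) - m) (by omega) (by omega)
      rw [show 2 * (p : ℤ) - ((m + 2 : ℕ) : ℤ) = 2 * (p : ℤ) - m - 2 by push_cast; ring,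
        show 2 * (p : ℤ) - (m:ℤ) - 2 + 1 = 2 * (p : ℤ) - m - 1 by ring]
      push_cast
      linarith

/-- Lemma B: `x (2p - k) ≤ k (k+1) / 2`. -/
lemma lemB0 (p : ℕ) (x : ℤ → ℝ) (hx : Feasible0 p x) :
    ∀ k : ℕ, (k : ℤ) ≤ 2 * (p : ℤ) - 1 →
      x (2 * (p : ℤ) - k) ≤ (k : ℝ) * (k + 1) / 2 := by
  intro k
  induction k with
  | zero =>
    intro _
    rw [hx.1 (2 * (p : ℤ) - ((0:ℕ):ℤ)) (by right; omega)]
    norm_num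
  | succ m ih =>
    intro hk
    have hIH := ih (by omega)
    have hA := lemA0 p x hx (m + 1) hk
    rw [show 2 * (p : ℤ) - ((m + 1 : ℕ) : ℤ) + 1 = 2 * (p : ℤ) - m by push_cast; ring]
      at hA
    push_cast at hA ⊢
    linarith

/-- The optimal point. -/
noncomputable def xopt (p : ℕ) : ℤ → ℝ := fun j =>
  if 1 ≤ j ∧ j ≤ 2 * (p : ℤ) - 1 then
    (2 * (p : ℝ) - (j : ℝ)) * (2 * (p : ℝ) - (j : ℝ) + 1) / 2
  else 0

lemma xopt_eq (p : ℕ) (j : ℤ) : xopt p j =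
    if 1 ≤ j ∧ j ≤ 2 * (p : ℤ) - 1 then
      (2 * (p : ℝ) - (j : ℝ)) * (2 * (p : ℝ) - (j : ℝ) + 1) / 2
    else 0 := rfl

lemma xopt_val (p : ℕ) (j : ℤ) (h1 : 1 ≤ j) (h2 : j ≤ 2 * (p : ℤ) + 1) :
    xopt p j = (2 * (p : ℝ) - (j : ℝ)) * (2 * (p : ℝ) - (j : ℝ) + 1) / 2 := by
  rw [xopt_eq]
  by_cases h : j ≤ 2 * (p : ℤ) - 1
  · rw [if_pos ⟨h1, h⟩]
  · rw [if_neg (by omega)]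
    have : j = 2 * (p : ℤ) ∨ j = 2 * (p : ℤ) + 1 := by omega
    rcases this with h | h <;> subst h <;> push_cast <;> ring

lemma xopt_feas (p : ℕ) (hp : 2 ≤ p) : Feasible0 p (xopt p) := by
  have hp' : (2 : ℝ) ≤ (p : ℝ) := by exact_mod_cast hp
  refine ⟨?_, ?_, ?_, ?_⟩
  · intro j hj
    rw [xopt_eq, if_neg (by omega)]
  · intro j hj1 hj2
    rw [xopt_eq, if_pos ⟨hj1, hj2⟩]
    have h1 : (j : ℝ) ≤ 2 * (p : ℝ) - 1 := by exact_mod_cast hj2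
    nlinarith [h1]
  · rw [xopt_eq, if_pos ⟨by omega, le_refl _⟩]
    push_cast
    ring_nf
    norm_num
  · intro i hi1 hi2
    by_cases h1 : i = 1
    · subst h1
      rw [show (1:ℤ) - 1 = 0 by ring, show (1:ℤ) - 2 = -1 by ring,
        show (1:ℤ) + 1 = 2 by ring]
      rw [show xopt p 0 = 0 by rw [xopt_eq, if_neg (by omega)],
        show xopt p (-1) = 0 by rw [xopt_eq, if_neg (by omega)],
        xopt_val p 1 (by omega) (by omega), xopt_val p 2 (by omega) (by omega)]
      push_cast
      nlinarith
    by_cases h2 : i = 2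
    · subst h2
      rw [show (2:ℤ) - 1 = 1 by ring, show (2:ℤ) - 2 = 0 by ring,
        show (2:ℤ) + 1 = 3 by ring]
      rw [show xopt p 0 = 0 by rw [xopt_eq, if_neg (by omega)],
        xopt_val p 1 (by omega) (by omega), xopt_val p 2 (by omega) (by omega),
        xopt_val p 3 (by omega) (by omega)]
      push_cast
      nlinarith
    · rw [xopt_val p (i - 1) (by omega) (by omega), xopt_val p i (by omega) (by omega),
        xopt_val p (i - 2) (by omega) (by omega), xopt_val p (i + 1) (by omega) (by omega)]
      push_cast
      ring_nf
      norm_num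

theorem stmt_0 (p : ℕ) (hp : 2 ≤ p) :
    (∀ x : ℤ → ℝ, Feasible0 p x → x 1 ≤ 2 * (p : ℝ) ^ 2 - p) ∧
    (∀ x : ℤ → ℝ, Feasible0 p x → x 1 = 2 * (p : ℝ) ^ 2 - p →
      ∀ j : ℤ, 1 ≤ j → j ≤ 2 * (p : ℤ) - 1 →
        x j = (2 * (p : ℝ) - (j : ℝ)) * (2 * (p : ℝ) - (j : ℝ) + 1) / 2) ∧
    (∃ x : ℤ → ℝ, Feasible0 p x ∧ x 1 = 2 * (p : ℝ) ^ 2 - p ∧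
      ∀ j : ℤ, 1 ≤ j → j ≤ 2 * (p : ℤ) - 1 →
        x j = (2 * (p : ℝ) - (j : ℝ)) * (2 * (p : ℝ) - (j : ℝ) + 1) / 2) := by
  have hp' : (2 : ℝ) ≤ (p : ℝ) := by exact_mod_cast hp
  have part1 : ∀ x : ℤ → ℝ, Feasible0 p x → x 1 ≤ 2 * (p : ℝ) ^ 2 - p := by
    intro x hx
    obtain ⟨k, hk⟩ : ∃ k : ℕ, (k : ℤ) = 2 * (p : ℤ) - 1 :=
      ⟨(2 * (p : ℤ) - 1).toNat, by omega⟩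
    have hB := lemB0 p x hx k (by omega)
    rw [show 2 * (p : ℤ) - (k : ℤ) = 1 by omega] at hB
    have hkR : (k : ℝ) = 2 * (p : ℝ) - 1 := by exact_mod_cast hk
    rw [hkR] at hB
    nlinarith [hB]
  refine ⟨part1, ?_, ?_⟩
  · -- Part 2: uniqueness
    intro x hx heq
    have key : ∀ m : ℕ, (m : ℤ) ≤ 2 * (p : ℤ) - 2 →
        x (1 + m) = (2 * (p : ℝ) - 1 - m) * (2 * (p : ℝ) - m) / 2 := by
      intro m
      induction m with
      | zero =>
        intro _
        push_cast
        rw [heq]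
        ring
      | succ m ih =>
        intro hm
        have hIH := ih (by omega)
        -- Lemma A at k with (k : ℤ) = 2p - 1 - m
        obtain ⟨k, hk⟩ : ∃ k : ℕ, (k : ℤ) = 2 * (p : ℤ) - 1 - m :=
          ⟨(2 * (p : ℤ) - 1 - m).toNat, by omega⟩
        have hA := lemA0 p x hx k (by omega)
        rw [show 2 * (p : ℤ) - (k : ℤ) = 1 + m by omega] at hA
        have hkR : (k : ℝ) = 2 * (p : ℝ) - 1 - m := by exact_mod_cast hk
        rw [hkR] at hA
        -- Lemma B at k' with (k' : ℤ) = 2p - 2 - m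
        obtain ⟨k', hk'⟩ : ∃ k' : ℕ, (k' : ℤ) = 2 * (p : ℤ) - 2 - m :=
          ⟨(2 * (p : ℤ) - 2 - m).toNat, by omega⟩
        have hB := lemB0 p x hx k' (by omega)
        rw [show 2 * (p : ℤ) - (k' : ℤ) = 1 + m + 1 by omega] at hB
        have hkR' : (k' : ℝ) = 2 * (p : ℝ) - 2 - m := by exact_mod_cast hk'
        rw [hkR'] at hB
        rw [show (1 : ℤ) + ((m + 1 : ℕ) : ℤ) = 1 + m + 1 by push_cast; ring]
        push_cast
        nlinarith [hA, hB, hIH]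
    intro j hj1 hj2
    obtain ⟨m, rfl⟩ : ∃ m : ℕ, j = 1 + m := ⟨(j - 1).toNat, by omega⟩
    rw [key m (by omega)]
    push_cast
    ring
  · -- Part 3: existence
    refine ⟨xopt p, xopt_feas p hp, ?_, ?_⟩
    · rw [xopt_eq, if_pos ⟨le_refl _, by omega⟩]
      push_cast
      ring
    · intro j hj1 hj2
      rw [xopt_eq, if_pos ⟨hj1, hj2⟩]
end

section
/- Let p ≥ 3 and let ℓ be an odd integer with 3 ≤ ℓ ≤ p. Consider real numbers x_1, …, x_p satisfying: x_j ≥ 0 for all j; x_ℓ ≤ 1; x_{i−1} + x_i − x_{i−2} − x_{i+1} ≥ −2 for all 1 ≤ i ≤ p−1; and x_p − x_{p−2} ≥ −1 (variables with index outside {1,…,p} denote 0). Then (p−1) + (x_p − x_{p−2} + x_1 − x_ℓ) < p². -/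
theorem stmt_4 (p l : ℕ) (hp : 3 ≤ p) (hl3 : 3 ≤ l) (hlp : l ≤ p) (hodd : Odd l)
    (x : ℤ → ℝ)
    (hzero : ∀ j : ℤ, (j < 1 ∨ (p : ℤ) < j) → x j = 0)
    (hnn : ∀ j : ℤ, 1 ≤ j → j ≤ (p : ℤ) → 0 ≤ x j)
    (hl : x (l : ℤ) ≤ 1)
    (hineq : ∀ i : ℤ, 1 ≤ i → i ≤ (p : ℤ) - 1 →
      x (i - 1) + x i - x (i - 2) - x (i + 1) ≥ -2)
    (hlast : x (p : ℤ) - x ((p : ℤ) - 2) ≥ -1) :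
    ((p : ℝ) - 1) + (x (p : ℤ) - x ((p : ℤ) - 2) + x 1 - x (l : ℤ)) < (p : ℝ) ^ 2 := by
  obtain ⟨t, ht⟩ := hodd
  -- Chain upward from l : f(l+n) ≤ f(l) + 2n
  have A : ∀ n : ℕ, (l : ℤ) + n ≤ (p : ℤ) →
      x ((l : ℤ) + n) - x ((l : ℤ) + n - 2) ≤ x (l : ℤ) - x ((l : ℤ) - 2) + 2 * (n : ℝ) := by
    intro n
    induction n with
    | zero => intro _; norm_num
    | succ n ih =>
      intro hn
      have h1 := hineq ((l : ℤ) + n) (by omega) (by omega)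
      have h2 := ih (by omega)
      push_cast at h1 h2 ⊢
      ring_nf at h1 h2 ⊢
      linarith
  -- Chain downward from p : f(p - n) ≥ -1 - 2n
  have B : ∀ n : ℕ, (n : ℤ) ≤ (p : ℤ) - 1 →
      x ((p : ℤ) - n) - x ((p : ℤ) - n - 2) ≥ -1 - 2 * (n : ℝ) := by
    intro n
    induction n with
    | zero => intro _; simpa using hlast
    | succ n ih =>
      intro hn
      have h1 := hineq ((p : ℤ) - n - 1) (by omega) (by omega)
      have h2 := ih (by omega)
      push_cast at h1 h2 ⊢
      ring_nf at h1 h2 ⊢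
      linarith
  have B' : ∀ j : ℤ, 1 ≤ j → j ≤ (p : ℤ) →
      x j - x (j - 2) ≥ -1 - 2 * ((((p : ℤ) - j) : ℤ) : ℝ) := by
    intro j h1 h2
    obtain ⟨n, hn⟩ : ∃ n : ℕ, (n : ℤ) = (p : ℤ) - j := ⟨((p : ℤ) - j).toNat, by omega⟩
    have hb := B n (by omega)
    have e : (p : ℤ) - n = j := by omega
    rw [e] at hb
    have ecast : ((((p : ℤ) - j) : ℤ) : ℝ) = (n : ℝ) := by rw [← hn]; push_cast; ring
    rw [ecast]
    exact hb
  -- Lower bound on odd entries : x(2k+1) ≥ x 1 + k(2k+3-2p)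
  have C : ∀ k : ℕ, (2 * k + 1 : ℤ) ≤ (p : ℤ) →
      x (2 * (k : ℤ) + 1) ≥ x 1 + (k : ℝ) * (2 * (k : ℝ) + 3 - 2 * (p : ℝ)) := by
    intro k
    induction k with
    | zero => intro _; norm_num
    | succ k ih =>
      intro hk
      have hb := B' (2 * (k : ℤ) + 3) (by omega) (by omega)
      have h2 := ih (by omega)
      push_cast at hb h2 ⊢
      ring_nf at hb h2 ⊢
      linarith
  obtain ⟨n, hn⟩ : ∃ n : ℕ, (l : ℤ) + n = (p : ℤ) := ⟨p - l, by omega⟩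
  have hA := A n (by omega)
  rw [hn] at hA
  have hnr : (n : ℝ) = (p : ℝ) - (l : ℝ) := by
    have h : (l : ℝ) + (n : ℝ) = (p : ℝ) := by exact_mod_cast hn
    linarith
  rw [hnr] at hA
  have hC := C t (by omega)
  have hl2 : 0 ≤ x ((l : ℤ) - 2) := hnn _ (by omega) (by omega)
  have el : ((l : ℕ) : ℤ) = 2 * (t : ℤ) + 1 := by omega
  have elr : ((l : ℕ) : ℝ) = 2 * (t : ℝ) + 1 := by rw [ht]; push_cast; ring
  rw [el] at hA hl hl2 ⊢
  rw [elr] at hA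
  have ht1 : (1 : ℝ) ≤ (t : ℝ) := by
    have : 1 ≤ t := by omega
    exact_mod_cast this
  have hpt : 2 * (t : ℝ) + 1 ≤ (p : ℝ) := by
    have : 2 * t + 1 ≤ p := by omega
    exact_mod_cast this
  have hp3 : (3 : ℝ) ≤ (p : ℝ) := by exact_mod_cast hp
  nlinarith [sq_nonneg ((p : ℝ) - (t : ℝ) - 2), hA, hC, hl, hl2]
end

section
/- Let p ≥ 3 and let ℓ be an odd integer with 3 ≤ ℓ ≤ p. Consider real numbers x_1, …, x_p satisfying: x_j ≥ 0 for all j; x_ℓ ≤ 1; x_{i−1} + x_i − x_{i−2} − x_{i+1} ≥ −2 for all 1 ≤ i ≤ p−2; x_{p−2} + x_{p−1} − x_{p−3} − 2x_p ≥ −2; and 2x_p − x_{p−2} ≥ −1 (variables with index outside {1,…,p} denote 0). Then (p−1) + (x_1 − x_ℓ) < p². -/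
theorem stmt_5 (p l : ℕ) (hp : 3 ≤ p) (hl3 : 3 ≤ l) (hlp : l ≤ p) (hodd : Odd l)
    (x : ℤ → ℝ)
    (hzero : ∀ j : ℤ, (j < 1 ∨ (p : ℤ) < j) → x j = 0)
    (hnn : ∀ j : ℤ, 1 ≤ j → j ≤ (p : ℤ) → 0 ≤ x j)
    (hl : x (l : ℤ) ≤ 1)
    (hineq : ∀ i : ℤ, 1 ≤ i → i ≤ (p : ℤ) - 2 →
      x (i - 1) + x i - x (i - 2) - x (i + 1) ≥ -2)
    (hnexttolast : x ((p : ℤ) - 2) + x ((p : ℤ) - 1) - x ((p : ℤ) - 3) -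
      2 * x (p : ℤ) ≥ -2)
    (hlast : 2 * x (p : ℤ) - x ((p : ℤ) - 2) ≥ -1) :
    ((p : ℝ) - 1) + (x 1 - x (l : ℤ)) < (p : ℝ) ^ 2 := by
  have hp3 : (3 : ℝ) ≤ (p : ℝ) := by exact_mod_cast hp
  -- chain lemma on differences
  have chain : ∀ s : ℕ, ∀ j : ℤ, 1 ≤ j → j + 2*(s:ℤ) ≤ (p:ℤ) - 2 →
      x (j + 2*(s:ℤ) + 1) - x (j + 2*(s:ℤ)) - 2*(s:ℝ) ≤ x (j+1) - x j := by
    intro s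
    induction s with
    | zero => intro j _ _; norm_num
    | succ s ih =>
      intro j hj hle
      have h1 : j + 2*(s:ℤ) ≤ (p:ℤ) - 2 := by
        have : ((s+1:ℕ):ℤ) = (s:ℤ)+1 := by push_cast; ring
        omega
      have ih' := ih j hj h1
      have hi := hineq (j + 2*(s:ℤ) + 2) (by omega) (by
        have : ((s+1:ℕ):ℤ) = (s:ℤ)+1 := by push_cast; ring
        omega)
      rw [show j + 2*(s:ℤ) + 2 - 1 = j + 2*(s:ℤ) + 1 by ring,
          show j + 2*(s:ℤ) + 2 - 2 = j + 2*(s:ℤ) by ring] at hi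
      push_cast
      rw [show j + 2*((s:ℤ)+1) + 1 = j + 2*(s:ℤ) + 2 + 1 by ring,
          show j + 2*((s:ℤ)+1) = j + 2*(s:ℤ) + 2 by ring]
      linarith
  have htail : x ((p:ℤ)-1) - x ((p:ℤ)-3) ≥ -3 := by linarith
  -- main claim by induction
  have claim : ∀ k : ℕ, 2*(k:ℤ)+1 ≤ (p:ℤ)-1 →
      x 1 - x (2*(k:ℤ)+1) ≤ (k:ℝ)*(2*(p:ℝ)-3) - 2*(k:ℝ)^2 := by
    intro k
    induction k with
    | zero => intro _; norm_num
    | succ k ih =>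
      intro hk
      have hk' : 2*(k:ℤ)+1 ≤ (p:ℤ)-1 := by
        have : ((k+1:ℕ):ℤ) = (k:ℤ)+1 := by push_cast; ring
        omega
      have ih' := ih hk'
      have hkp : 2*(k:ℤ)+3 ≤ (p:ℤ)-1 := by
        have : ((k+1:ℕ):ℤ) = (k:ℤ)+1 := by push_cast; ring
        omega
      obtain ⟨q, hq⟩ : ∃ q : ℕ, p = 2*q ∨ p = 2*q+1 := ⟨p/2, by omega⟩
      rcases hq with hq | hq
      · -- p even
        set s : ℕ := q - k - 2 with hs
        have hkq : k + 2 ≤ q := by omega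
        have hsz : (s:ℤ) = (q:ℤ) - (k:ℤ) - 2 := by omega
        have c1 := chain s (2*(k:ℤ)+1) (by omega) (by omega)
        have c2 := chain s (2*(k:ℤ)+2) (by omega) (by omega)
        rw [show 2*(k:ℤ)+1 + 2*(s:ℤ) = (p:ℤ)-3 by omega] at c1
        rw [show (p:ℤ)-3+1 = (p:ℤ)-2 by ring] at c1
        rw [show 2*(k:ℤ)+2 + 2*(s:ℤ) = (p:ℤ)-2 by omega] at c2
        rw [show (p:ℤ)-2+1 = (p:ℤ)-1 by ring,
            show 2*(k:ℤ)+2+1 = 2*(k:ℤ)+3 by ring] at c2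
        have hsr : (s:ℝ) = (q:ℝ) - (k:ℝ) - 2 := by exact_mod_cast hsz
        have hpr : (p:ℝ) = 2*(q:ℝ) := by exact_mod_cast hq
        push_cast
        rw [show 2*((k:ℤ)+1)+1 = 2*(k:ℤ)+3 by ring]
        have e21 : (2*(k:ℤ)+1) + 1 = 2*(k:ℤ)+2 := by ring
        rw [e21] at c1
        linarith
      · -- p odd
        set s1 : ℕ := q - k - 1 with hs1
        set s2 : ℕ := q - k - 2 with hs2
        have hkq : k + 2 ≤ q := by omega
        have hs1z : (s1:ℤ) = (q:ℤ) - (k:ℤ) - 1 := by omega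
        have hs2z : (s2:ℤ) = (q:ℤ) - (k:ℤ) - 2 := by omega
        have c1 := chain s1 (2*(k:ℤ)+1) (by omega) (by omega)
        have c2 := chain s2 (2*(k:ℤ)+2) (by omega) (by omega)
        rw [show 2*(k:ℤ)+1 + 2*(s1:ℤ) = (p:ℤ)-2 by omega] at c1
        rw [show (p:ℤ)-2+1 = (p:ℤ)-1 by ring] at c1
        rw [show 2*(k:ℤ)+2 + 2*(s2:ℤ) = (p:ℤ)-3 by omega] at c2
        rw [show (p:ℤ)-3+1 = (p:ℤ)-2 by ring,
            show 2*(k:ℤ)+2+1 = 2*(k:ℤ)+3 by ring] at c2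
        have hs1r : (s1:ℝ) = (q:ℝ) - (k:ℝ) - 1 := by exact_mod_cast hs1z
        have hs2r : (s2:ℝ) = (q:ℝ) - (k:ℝ) - 2 := by exact_mod_cast hs2z
        have hpr : (p:ℝ) = 2*(q:ℝ)+1 := by exact_mod_cast hq
        push_cast
        rw [show 2*((k:ℤ)+1)+1 = 2*(k:ℤ)+3 by ring]
        have e21 : (2*(k:ℤ)+1) + 1 = 2*(k:ℤ)+2 := by ring
        rw [e21] at c1
        linarith
  obtain ⟨m, hm⟩ := hodd
  by_cases hcase : (l:ℤ) ≤ (p:ℤ) - 1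
  · have hcl := claim m (by omega)
    have el : ((l:ℕ):ℤ) = 2*(m:ℤ)+1 := by omega
    rw [el]
    have hmb : 2*(m:ℝ)+1 ≤ (p:ℝ)-1 := by
      have : 2*(m:ℤ)+1 ≤ (p:ℤ)-1 := by omega
      exact_mod_cast this
    nlinarith [hcl, sq_nonneg (4*(m:ℝ) - (2*(p:ℝ)-3)), hp3, sq_nonneg ((p:ℝ)-3)]
  · -- l = p, p odd, m ≥ 1
    have hlp' : (l:ℤ) = (p:ℤ) := by omega
    have hm1 : 1 ≤ m := by omega
    have hcl := claim (m-1) (by omega)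
    rw [show 2*((m-1:ℕ):ℤ)+1 = (p:ℤ)-2 by omega] at hcl
    have hmr : 2*((m-1:ℕ):ℝ) = (p:ℝ)-3 := by
      have : 2*((m-1:ℕ):ℤ) = (p:ℤ)-3 := by omega
      exact_mod_cast this
    have hl' : x (p:ℤ) ≤ 1 := by rw [hlp'] at hl; exact hl
    rw [hlp']
    nlinarith [hcl, hlast, hl', hp3, hmr, sq_nonneg ((p:ℝ)-3)]
end

section
/- Consider real numbers x_1, …, x_5 satisfying: x_j ≥ 0 for all j; x_1 − x_2 + x_3 − x_4 + x_5 ≥ −1; x_1 − x_3 + x_4 − x_5 ≥ −1; −x_1 + x_2 + x_3 − x_5 ≥ −1; −x_1 + x_2 − x_3 + x_5 ≥ −1; −x_1 + x_4 ≥ −1; and x_3 ≤ 1. Then the maximum of −x_1 + x_2 − x_3 + x_4 over this polytope equals 10, attained exactly at (x_1, …, x_5) = (5, 12, 1, 4, 9). -/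
/-- Feasibility for the linear program of case 46 (p = 5) with `Γ` supported on `α'_1`. -/
def Feasible17 (x1 x2 x3 x4 x5 : ℝ) : Prop :=
  0 ≤ x1 ∧ 0 ≤ x2 ∧ 0 ≤ x3 ∧ 0 ≤ x4 ∧ 0 ≤ x5 ∧
  x1 - x2 + x3 - x4 + x5 ≥ -1 ∧ x1 - x3 + x4 - x5 ≥ -1 ∧
  -x1 + x2 + x3 - x5 ≥ -1 ∧ -x1 + x2 - x3 + x5 ≥ -1 ∧
  -x1 + x4 ≥ -1 ∧ x3 ≤ 1

theorem stmt_17 :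
    IsGreatest {v : ℝ | ∃ x1 x2 x3 x4 x5 : ℝ, Feasible17 x1 x2 x3 x4 x5 ∧
      v = -x1 + x2 - x3 + x4} 10 ∧
    (∀ x1 x2 x3 x4 x5 : ℝ, Feasible17 x1 x2 x3 x4 x5 →
      -x1 + x2 - x3 + x4 = 10 →
      x1 = 5 ∧ x2 = 12 ∧ x3 = 1 ∧ x4 = 4 ∧ x5 = 9) := by
  constructor
  · constructor
    · exact ⟨5, 12, 1, 4, 9, ⟨by norm_num, by norm_num, by norm_num, by norm_num, by norm_num,
        by norm_num, by norm_num, by norm_num, by norm_num, by norm_num, by norm_num⟩, by norm_num⟩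
    · rintro v ⟨x1, x2, x3, x4, x5, ⟨h1, h2, h3, h4, h5, hA, hB, hC, hD, hE, hF⟩, rfl⟩
      linarith
  · rintro x1 x2 x3 x4 x5 ⟨h1, h2, h3, h4, h5, hA, hB, hC, hD, hE, hF⟩ hobj
    refine ⟨by linarith, by linarith, by linarith, by linarith, by linarith⟩
end

section
/- Let p ≥ 2 be an integer. Consider real numbers x_1, …, x_{p−1} and x'_1, …, x'_p satisfying: all variables ≥ 0; x'_p ≤ 1; and for every 1 ≤ i ≤ p both −x_{p−i} + x_{p−i+1} − x'_{i−1} + x'_i ≥ −1 and x_{p−i} − x_{p−i+1} + x'_i − x'_{i+1} ≥ −1 (where any x_j with j outside {1,…,p−1} and any x'_j with j outside {1,…,p} denotes 0). Then x'_1 ≤ p², and this bound is attained exactly at the point with x_i = i(i+1) for 1 ≤ i ≤ p−1 and x'_i = (p−i+1)² for 1 ≤ i ≤ p. -/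
/-- Feasibility for the linear program of case 49 (the comodel case) with `Γ`
supported on `α'_p`: variables `x 1, …, x (p-1)` and `y 1, …, y p` (indices outside
these ranges denote `0`), all nonnegative, `y p ≤ 1`, and for every `1 ≤ i ≤ p` both
`-x (p-i) + x (p-i+1) - y (i-1) + y i ≥ -1` and
`x (p-i) - x (p-i+1) + y i - y (i+1) ≥ -1`. -/
def Feasible19 (p : ℕ) (x y : ℤ → ℝ) : Prop :=
  (∀ j : ℤ, (j < 1 ∨ (p : ℤ) - 1 < j) → x j = 0) ∧
  (∀ j : ℤ, (j < 1 ∨ (p : ℤ) < j) → y j = 0) ∧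
  (∀ j : ℤ, 1 ≤ j → j ≤ (p : ℤ) - 1 → 0 ≤ x j) ∧
  (∀ j : ℤ, 1 ≤ j → j ≤ (p : ℤ) → 0 ≤ y j) ∧
  y (p : ℤ) ≤ 1 ∧
  (∀ i : ℤ, 1 ≤ i → i ≤ (p : ℤ) →
    -x ((p : ℤ) - i) + x ((p : ℤ) - i + 1) - y (i - 1) + y i ≥ -1 ∧
    x ((p : ℤ) - i) - x ((p : ℤ) - i + 1) + y i - y (i + 1) ≥ -1)

/-- Downward chain: with `g i = y i - (p-i+1)^2`, one has `g i ≤ g (i+1)` and `g i ≤ 0`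
for `1 ≤ i ≤ p`. -/
lemma chain19 (p : ℕ) (hp : 2 ≤ p) (x y : ℤ → ℝ) (h : Feasible19 p x y) :
    ∀ i : ℤ, i ≤ (p : ℤ) → 1 ≤ i →
      (y i - ((p : ℝ) - (i : ℝ) + 1) ^ 2 ≤ y (i + 1) - ((p : ℝ) - (i : ℝ)) ^ 2 ∧
       y i - ((p : ℝ) - (i : ℝ) + 1) ^ 2 ≤ 0) := by
  obtain ⟨h1, h2, h3, h4, h5, h6⟩ := h
  intro i hip hi1
  refine Int.le_induction_down (motive := fun i _ => 1 ≤ i →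
      (y i - ((p : ℝ) - (i : ℝ) + 1) ^ 2 ≤ y (i + 1) - ((p : ℝ) - (i : ℝ)) ^ 2 ∧
       y i - ((p : ℝ) - (i : ℝ) + 1) ^ 2 ≤ 0)) ?_ ?_ i hip hi1
  · intro _
    have hy0 : y ((p : ℤ) + 1) = 0 := h2 _ (Or.inr (by omega))
    constructor
    · rw [hy0]; push_cast; nlinarith [h5]
    · push_cast; nlinarith [h5]
  · intro n hn ih h1n
    have hn2 : 2 ≤ n := by omega
    have ihn := ih (by omega)
    obtain ⟨hA, hB⟩ := h6 n (by omega) hn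
    have e : n - 1 + 1 = n := by ring
    rw [e]
    push_cast
    constructor <;> nlinarith [ihn.1, ihn.2, hA, hB]

/-- Upward chain: `g 1 ≤ g i` for `1 ≤ i ≤ p`. -/
lemma chain19' (p : ℕ) (hp : 2 ≤ p) (x y : ℤ → ℝ) (h : Feasible19 p x y) :
    ∀ i : ℤ, 1 ≤ i → i ≤ (p : ℤ) →
      y 1 - (p : ℝ) ^ 2 ≤ y i - ((p : ℝ) - (i : ℝ) + 1) ^ 2 := by
  intro i hi1 hip
  refine Int.le_induction (motive := fun i _ => i ≤ (p : ℤ) →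
      y 1 - (p : ℝ) ^ 2 ≤ y i - ((p : ℝ) - (i : ℝ) + 1) ^ 2) ?_ ?_ i hi1 hip
  · intro _
    push_cast
    nlinarith []
  · intro n hn ih hnp
    have h1 := (chain19 p hp x y h n (by omega) hn).1
    have h2 := ih (by omega)
    push_cast
    nlinarith [h1, h2]

theorem stmt_19 (p : ℕ) (hp : 2 ≤ p) :
    (∀ x y : ℤ → ℝ, Feasible19 p x y → y 1 ≤ (p : ℝ) ^ 2) ∧
    (∀ x y : ℤ → ℝ, Feasible19 p x y → y 1 = (p : ℝ) ^ 2 →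
      (∀ i : ℤ, 1 ≤ i → i ≤ (p : ℤ) - 1 → x i = (i : ℝ) * ((i : ℝ) + 1)) ∧
      (∀ i : ℤ, 1 ≤ i → i ≤ (p : ℤ) → y i = ((p : ℝ) - (i : ℝ) + 1) ^ 2)) ∧
    (∃ x y : ℤ → ℝ, Feasible19 p x y ∧ y 1 = (p : ℝ) ^ 2 ∧
      (∀ i : ℤ, 1 ≤ i → i ≤ (p : ℤ) - 1 → x i = (i : ℝ) * ((i : ℝ) + 1)) ∧
      (∀ i : ℤ, 1 ≤ i → i ≤ (p : ℤ) → y i = ((p : ℝ) - (i : ℝ) + 1) ^ 2)) := by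
  have hp2 : (2 : ℝ) ≤ (p : ℝ) := by exact_mod_cast hp
  refine ⟨?_, ?_, ?_⟩
  · -- the bound
    intro x y h
    have := (chain19 p hp x y h 1 (by omega) (by omega)).2
    push_cast at this
    nlinarith [this]
  · -- uniqueness
    intro x y h heq
    have hy : ∀ i : ℤ, 1 ≤ i → i ≤ (p : ℤ) → y i = ((p : ℝ) - (i : ℝ) + 1) ^ 2 := by
      intro i hi1 hip
      have h1 := (chain19 p hp x y h i hip hi1).2
      have h2 := chain19' p hp x y h i hi1 hip
      rw [heq] at h2
      linarith
    obtain ⟨h1, h2, h3, h4, h5, h6⟩ := h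
    refine ⟨?_, hy⟩
    -- x part
    have hx : ∀ i : ℤ, 0 ≤ i → i ≤ (p : ℤ) - 1 → x i = (i : ℝ) * ((i : ℝ) + 1) := by
      intro i hi0 hip
      refine Int.le_induction (motive := fun i _ => i ≤ (p : ℤ) - 1 →
          x i = (i : ℝ) * ((i : ℝ) + 1)) ?_ ?_ i hi0 hip
      · intro _
        rw [h1 0 (Or.inl (by omega))]
        norm_num
      · intro n hn ih hnp
        have ihn := ih (by omega)
        obtain ⟨hA, hB⟩ := h6 ((p : ℤ) - n) (by omega) (by omega)
        have e : (p : ℤ) - ((p : ℤ) - n) = n := by ring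
        rw [e] at hA hB
        have hy1 : y ((p : ℤ) - n - 1) = ((n : ℝ) + 2) ^ 2 := by
          rw [hy _ (by omega) (by omega)]; push_cast; ring
        have hy2 : y ((p : ℤ) - n) = ((n : ℝ) + 1) ^ 2 := by
          rw [hy _ (by omega) (by omega)]; push_cast; ring
        have hy3 : y ((p : ℤ) - n + 1) = (n : ℝ) ^ 2 := by
          by_cases hn0 : n = 0
          · subst hn0
            rw [h2 _ (Or.inr (by omega))]
            norm_num
          · rw [hy _ (by omega) (by omega)]; push_cast; ring
        rw [hy1, hy2] at hA
        rw [hy2, hy3] at hB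
        push_cast
        nlinarith [hA, hB, ihn]
    intro i hi1 hip
    exact hx i (by omega) hip
  · -- existence
    set x0 : ℤ → ℝ := fun j => if 1 ≤ j ∧ j ≤ (p : ℤ) - 1 then (j : ℝ) * ((j : ℝ) + 1) else 0
      with hx0def
    set y0 : ℤ → ℝ := fun j => if 1 ≤ j ∧ j ≤ (p : ℤ) then ((p : ℝ) - (j : ℝ) + 1) ^ 2 else 0
      with hy0def
    have hx0 : ∀ j : ℤ, 1 ≤ j → j ≤ (p : ℤ) - 1 → x0 j = (j : ℝ) * ((j : ℝ) + 1) := by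
      intro j a b; simp only [hx0def]; rw [if_pos ⟨a, b⟩]
    have hx0' : ∀ j : ℤ, j < 1 ∨ (p : ℤ) - 1 < j → x0 j = 0 := by
      intro j hj; simp only [hx0def]; rw [if_neg (by omega)]
    have hy0 : ∀ j : ℤ, 1 ≤ j → j ≤ (p : ℤ) → y0 j = ((p : ℝ) - (j : ℝ) + 1) ^ 2 := by
      intro j a b; simp only [hy0def]; rw [if_pos ⟨a, b⟩]
    have hy0' : ∀ j : ℤ, j < 1 ∨ (p : ℤ) < j → y0 j = 0 := by
      intro j hj; simp only [hy0def]; rw [if_neg (by omega)]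
    refine ⟨x0, y0, ⟨hx0', hy0', ?_, ?_, ?_, ?_⟩, ?_, ?_, ?_⟩
    · intro j a b
      rw [hx0 j a b]
      have : (1 : ℝ) ≤ (j : ℝ) := by exact_mod_cast a
      nlinarith
    · intro j a b
      rw [hy0 j a b]
      positivity
    · rw [hy0 (p : ℤ) (by omega) le_rfl]
      push_cast
      norm_num
    · intro i hi1 hip
      by_cases hip' : i = (p : ℤ)
      · subst hip'
        rw [hx0' ((p : ℤ) - (p : ℤ)) (Or.inl (by omega)),
            hx0 ((p : ℤ) - (p : ℤ) + 1) (by omega) (by omega),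
            hy0 ((p : ℤ) - 1) (by omega) (by omega),
            hy0 (p : ℤ) (by omega) le_rfl,
            hy0' ((p : ℤ) + 1) (Or.inr (by omega))]
        push_cast
        constructor <;> nlinarith [hp2]
      · by_cases hi1' : i = 1
        · subst hi1'
          rw [hx0 ((p : ℤ) - 1) (by omega) (by omega),
              hx0' ((p : ℤ) - 1 + 1) (Or.inr (by omega)),
              hy0' ((1 : ℤ) - 1) (Or.inl (by omega)),
              hy0 (1 : ℤ) (by omega) (by omega),
              hy0 ((1 : ℤ) + 1) (by omega) (by omega)]
          push_cast
          constructor <;> nlinarith [hp2]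
        · -- middle case 2 ≤ i ≤ p - 1
          rw [hx0 ((p : ℤ) - i) (by omega) (by omega),
              hx0 ((p : ℤ) - i + 1) (by omega) (by omega),
              hy0 (i - 1) (by omega) (by omega),
              hy0 i (by omega) (by omega),
              hy0 (i + 1) (by omega) (by omega)]
          push_cast
          constructor <;> nlinarith [hp2]
    · rw [hy0 1 (by omega) (by omega)]
      push_cast
      ring
    · intro i a b
      exact hx0 i a b
    · intro i a b
      exact hy0 i a b
end
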